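/- arXiv:1603.03059 — 5 statements merged into one kernel-verified Lean document; each statement's English description precedes it below -/
import Mathlib

section
/- For every word u over U = {a,c,d}, the word f(g(u)) over S = {1,2,3} is factor-good, i.e., contains none of the factors 1231321, 1321231, 2132312, 2312132, 3123213, 3213123. -/
/-!
Alphabet encodings:
* `S = {1,2,3}` is `Fin 3` with `1 ↦ 0`, `2 ↦ 1`, `3 ↦ 2` (so `1 < 2 < 3` matches `0 < 1 < 2`).
* `T = {a,b,c,d}` is `Fin 4` with `a ↦ 0`, `b ↦ 1`, `c ↦ 2`, `d ↦ 3`.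
* `U = {a,c,d}` is `Fin 3` with `a ↦ 0`, `c ↦ 1`, `d ↦ 2` (so `a < c < d` matches `0 < 1 < 2`).
-/

/-- The six forbidden factors `1231321, 1321231, 2132312, 2312132, 3123213, 3213123`
(images of the letter pattern `xyzxzyx`). -/
def Forbidden : List (List (Fin 3)) :=
  [[0,1,2,0,2,1,0], [0,2,1,0,1,2,0], [1,0,2,1,2,0,1],
   [1,2,0,1,0,2,1], [2,0,1,2,1,0,2], [2,1,0,2,0,1,2]]

/-- A finite word is square-free if it has no nonempty factor `x ++ x`. -/
def SquareFreeL {α : Type*} (w : List α) : Prop :=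
  ∀ x : List α, x ≠ [] → ¬ (x ++ x) <:+: w

/-- A finite word over `S` is factor-good if no forbidden factor occurs in it. -/
def FactorGoodL (w : List (Fin 3)) : Prop :=
  ∀ p ∈ Forbidden, ¬ p <:+: w

/-- A finite word over `S` is good if it is square-free and factor-good. -/
def GoodL (w : List (Fin 3)) : Prop := SquareFreeL w ∧ FactorGoodL w

/-- The factor of an ω-word `w` starting at position `i`, of length `n`. -/
def factorAtN {α : Type*} (w : ℕ → α) (i n : ℕ) : List α :=
  (List.range n).map fun k => w (i + k)

/-- `l` is a (finite) factor of the ω-word `w`. -/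
def IsFactorN {α : Type*} (l : List α) (w : ℕ → α) : Prop :=
  ∃ i : ℕ, l = factorAtN w i l.length

/-- An ω-word is square-free if no nonempty `x ++ x` is a factor of it. -/
def SquareFreeN {α : Type*} (w : ℕ → α) : Prop :=
  ∀ x : List α, x ≠ [] → ¬ IsFactorN (x ++ x) w

/-- An ω-word over `S` is factor-good if no forbidden factor occurs in it. -/
def FactorGoodN (w : ℕ → Fin 3) : Prop :=
  ∀ p ∈ Forbidden, ¬ IsFactorN p w

/-- An ω-word over `S` is good if it is square-free and factor-good. -/
def GoodN (w : ℕ → Fin 3) : Prop := SquareFreeN w ∧ FactorGoodN w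

/-- The factor of a ℤ-word `w` starting at position `i`, of length `n`. -/
def factorAtZ {α : Type*} (w : ℤ → α) (i : ℤ) (n : ℕ) : List α :=
  (List.range n).map fun k => w (i + k)

/-- `l` is a (finite) factor of the ℤ-word `w`. -/
def IsFactorZ {α : Type*} (l : List α) (w : ℤ → α) : Prop :=
  ∃ i : ℤ, l = factorAtZ w i l.length

/-- A ℤ-word is square-free if no nonempty `x ++ x` is a factor of it. -/
def SquareFreeZ {α : Type*} (w : ℤ → α) : Prop :=
  ∀ x : List α, x ≠ [] → ¬ IsFactorZ (x ++ x) w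

/-- A ℤ-word over `S` is factor-good if no forbidden factor occurs in it. -/
def FactorGoodZ (w : ℤ → Fin 3) : Prop :=
  ∀ p ∈ Forbidden, ¬ IsFactorZ p w

/-- A ℤ-word over `S` is good if it is square-free and factor-good. -/
def GoodZ (w : ℤ → Fin 3) : Prop := SquareFreeZ w ∧ FactorGoodZ w

/-- The ω-word `w` is the infinite concatenation `blocks 0 · blocks 1 · blocks 2 ⋯`. -/
def NConcat {α : Type*} (w : ℕ → α) (blocks : ℕ → List α) : Prop :=
  ∃ p : ℕ → ℕ, p 0 = 0 ∧ (∀ i, p (i + 1) = p i + (blocks i).length) ∧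
    ∀ i, blocks i = factorAtN w (p i) (blocks i).length

/-- The ℤ-word `w` is the bi-infinite concatenation `⋯ blocks (-1) · blocks 0 · blocks 1 ⋯`
(up to a shift of indexing). -/
def ZConcat {α : Type*} (w : ℤ → α) (blocks : ℤ → List α) : Prop :=
  ∃ p : ℤ → ℤ, (∀ i, p (i + 1) = p i + (blocks i).length) ∧
    ∀ i, blocks i = factorAtZ w (p i) (blocks i).length

/-- The morphism `f : T* → S*` on letters:
`f(a) = 1213`, `f(b) = 123`, `f(c) = 1323`, `f(d) = 1232`. -/
def fL : Fin 4 → List (Fin 3) := ![[0,1,0,2], [0,1,2], [0,2,1,2], [0,1,2,1]]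

/-- The morphism `f : T* → S*` on finite words. -/
def fW (v : List (Fin 4)) : List (Fin 3) := (v.map fL).flatten

/-- The inclusion `U → T`: `a ↦ a`, `c ↦ c`, `d ↦ d`. -/
def uT : Fin 3 → Fin 4 := ![0, 2, 3]

/-- Does `g` insert the letter `b` between `x` and `y`?  True exactly for the
pairs `ac`, `da`, `dc`. -/
def needB (x y : Fin 3) : Bool :=
  (x == 0 && y == 1) || (x == 2 && y == 0) || (x == 2 && y == 1)

/-- The map `g : U* → T*`, replacing each factor `ac` by `abc`, `da` by `dba`
and `dc` by `dbc`. -/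
def gW : List (Fin 3) → List (Fin 4)
  | [] => []
  | [x] => [uT x]
  | x :: y :: r => (uT x :: (if needB x y then [(1 : Fin 4)] else [])) ++ gW (y :: r)

/-- The block of `f(g(u))` contributed by position `i` of the ω-word `u` over `U`:
the `f`-image of `u i`, followed by `f(b) = 123` when `g` inserts a `b` after `u i`. -/
def fgBlockN (u : ℕ → Fin 3) (i : ℕ) : List (Fin 3) :=
  fL (uT (u i)) ++ (if needB (u i) (u (i + 1)) then fL 1 else [])

/-- The block of `f(g(u))` contributed by position `i` of the ℤ-word `u` over `U`. -/
def fgBlockZ (u : ℤ → Fin 3) (i : ℤ) : List (Fin 3) :=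
  fL (uT (u i)) ++ (if needB (u i) (u (i + 1)) then fL 1 else [])

/-- The letter permutation `π` of `S`: fixes `1`, interchanges `2` and `3`. -/
def pi3 : Fin 3 → Fin 3 := ![0, 2, 1]

/-- Lexicographic order on ω-words: `v ≤ w` iff `v = w` or at the first index
where they differ the letter of `v` is smaller. -/
def LexLeN {α : Type*} [LinearOrder α] (v w : ℕ → α) : Prop :=
  v = w ∨ ∃ n : ℕ, (∀ k < n, v k = w k) ∧ v n < w n

/-!
Each letter of `u` contributes to `f(g(u))` a block of length at least `4`, so a factor of length
`7` lies inside the image of at most three consecutive letters of `u`. It therefore suffices to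
check the words `u` of length at most `3`, which is a finite computation.
-/

theorem List.infix_append_or_of_prefix {α : Type*} {l xs ys q : List α} (hq : q <+: ys)
    (hlen : l.length ≤ q.length + 1) (h : l <:+: xs ++ ys) : l <:+: ys ∨ l <:+: xs ++ q := by
  rcases List.infix_append_iff_ne_nil.mp h with h | h | ⟨l₁, l₂, hl₁, -, rfl, hs, hp⟩
  · exact .inr (List.infix_append_of_infix_left h)
  · exact .inl h
  · have hl₂ : l₂.length ≤ q.length := by
      have := List.length_pos_iff.mpr hl₁
      rw [List.length_append] at hlen
      omega
    exact .inr (List.infix_append_iff.mpr (.inr (.inr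
      ⟨l₁, l₂, rfl, hs, List.prefix_of_prefix_length_le hp hq hl₂⟩)))

instance : DecidablePred FactorGoodL :=
  fun w => inferInstanceAs (Decidable (∀ p ∈ Forbidden, ¬ p <:+: w))

theorem length_of_mem_forbidden : ∀ p ∈ Forbidden, p.length = 7 := by decide

theorem fW_append (v w : List (Fin 4)) : fW (v ++ w) = fW v ++ fW w := by
  simp [fW]

theorem fW_prefix {v w : List (Fin 4)} (h : v <+: w) : fW v <+: fW w :=
  (h.map fL).flatten

theorem gW_cons_cons (x y : Fin 3) (r : List (Fin 3)) :
    gW (x :: y :: r) = (uT x :: if needB x y then [1] else []) ++ gW (y :: r) := rfl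

theorem gW_singleton_prefix (x : Fin 3) (r : List (Fin 3)) : gW [x] <+: gW (x :: r) := by
  cases r with
  | nil => exact List.prefix_refl _
  | cons y r => exact ⟨_, rfl⟩

theorem gW_pair_prefix (x y : Fin 3) (r : List (Fin 3)) : gW [x, y] <+: gW (x :: y :: r) := by
  rw [gW_cons_cons, gW_cons_cons]
  exact List.prefix_append_right_inj _ |>.mpr (gW_singleton_prefix y r)

theorem six_le_length_fW_gW_pair : ∀ x y : Fin 3, 6 ≤ (fW (gW [x, y])).length := by decide

theorem factorGoodL_fW_gW_triple : ∀ x y z : Fin 3, FactorGoodL (fW (gW [x, y, z])) := by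
  decide

theorem factorGoodL_fW_gW_cons {x y z : Fin 3} {r : List (Fin 3)}
    (h : FactorGoodL (fW (gW (y :: z :: r)))) : FactorGoodL (fW (gW (x :: y :: z :: r))) := by
  intro p hp hinf
  rw [gW_cons_cons, fW_append] at hinf
  have hlen : p.length ≤ (fW (gW [y, z])).length + 1 := by
    have := six_le_length_fW_gW_pair y z
    rw [length_of_mem_forbidden p hp]
    omega
  rcases List.infix_append_or_of_prefix (fW_prefix (gW_pair_prefix y z r)) hlen hinf with h' | h'
  · exact h p hp h'
  · refine factorGoodL_fW_gW_triple x y z p hp ?_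
    rwa [gW_cons_cons x y [z], fW_append]

/-- For every word `u` over `U = {a,c,d}`, the word `f(g(u))` is factor-good. -/
theorem stmt_5 (u : List (Fin 3)) : FactorGoodL (fW (gW u)) := by
  match u with
  | [] => decide
  | [x] => revert x; decide
  | [x, y] => revert x y; decide
  | _ :: y :: z :: r => exact factorGoodL_fW_gW_cons (stmt_5 (y :: z :: r))
end

section
/- Let w be a good word over S = {1,2,3} (finite, ω- or ℤ-word). Then 1231 is not a factor of w, or 1321 is not a factor of w. -/
/-!
Append letters one at a time to a good word beginning with `1231` and keep only its last seven
letters: a finite check shows that just 29 such windows occur and none of them ends in `1321`, so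
no good word begins with `1231` and ends with `1321`. Exchanging the letters `2` and `3` preserves
goodness and swaps the two patterns, which settles the other order of occurrence; two occurrences
in an infinite word lie in a common finite factor, which is good.
-/

open List

section Words

variable {α : Type*}

theorem squareFreeL_iff_tails [DecidableEq α] (w : List α) :
    SquareFreeL w ↔ ∀ t ∈ w.tails, ∀ x ∈ t.inits, x = [] ∨ ¬ x ++ x <+: t := by
  constructor
  · intro h t ht x _
    refine or_iff_not_imp_left.2 fun hx hp => h x hx ?_
    exact infix_iff_prefix_suffix.2 ⟨t, hp, (mem_tails _ _).1 ht⟩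
  · intro h x hx hinf
    obtain ⟨t, hpre, hsuf⟩ := infix_iff_prefix_suffix.1 hinf
    have hxt : x <+: t := (x.prefix_append x).trans hpre
    exact (h t ((mem_tails _ _).2 hsuf) x ((mem_inits _ _).2 hxt)).resolve_left hx hpre

instance [DecidableEq α] (w : List α) : Decidable (SquareFreeL w) :=
  decidable_of_iff _ (squareFreeL_iff_tails w).symm

theorem SquareFreeL.of_isInfix {u w : List α} (hw : SquareFreeL w) (h : u <:+: w) :
    SquareFreeL u :=
  fun x hx hinf => hw x hx (hinf.trans h)

theorem SquareFreeL.map {β : Type*} {f : α → β} (hf : Function.Injective f) {w : List α}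
    (hw : SquareFreeL w) : SquareFreeL (w.map f) := by
  intro x hx hinf
  obtain ⟨y, hy, hxy⟩ := infix_map_iff.1 hinf
  obtain ⟨y₁, y₂, rfl, h₁, h₂⟩ := map_eq_append_iff.1 hxy.symm
  obtain rfl : y₁ = y₂ := map_injective_iff.2 hf (h₁.trans h₂.symm)
  exact hw y₁ (by rintro rfl; exact hx (by simpa using h₁.symm)) hy

theorem exists_isInfix_prefix_suffix {p q s₁ t₁ s₂ t₂ w : List α}
    (h₁ : s₁ ++ p ++ t₁ = w) (h₂ : s₂ ++ q ++ t₂ = w) (hs : s₁.length ≤ s₂.length)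
    (hl : s₁.length + p.length ≤ s₂.length + q.length) :
    ∃ u, u <:+: w ∧ p <+: u ∧ q <:+ u := by
  refine ⟨(s₂ ++ q).drop s₁.length, ?_, ?_, ?_⟩
  · exact (drop_suffix _ _).isInfix.trans ⟨[], t₂, by simp [← h₂]⟩
  · have hpre : (s₂ ++ q).drop s₁.length <+: p ++ t₁ := by
      have : s₂ ++ q <+: s₁ ++ (p ++ t₁) := ⟨t₂, by rw [h₂, ← h₁, append_assoc]⟩
      simpa using this.drop s₁.length
    exact prefix_of_prefix_length_le (prefix_append p t₁) hpre (by simp only [length_drop, length_append]; omega)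
  · rw [drop_append_of_le_length hs]
    exact suffix_append _ _

theorem rtake_rtake_of_le (l : List α) {m n : ℕ} (h : m ≤ n) :
    (l.rtake n).rtake m = l.rtake m := by
  simp [rtake_eq_reverse_take_reverse, take_take, min_eq_left h]

end Words

instance (w : List (Fin 3)) : Decidable (FactorGoodL w) := by
  unfold FactorGoodL; infer_instance

instance (w : List (Fin 3)) : Decidable (GoodL w) := by
  unfold GoodL; infer_instance

theorem GoodL.of_isInfix {u w : List (Fin 3)} (hw : GoodL w) (h : u <:+: w) : GoodL u :=
  ⟨hw.1.of_isInfix h, fun p hp hinf => hw.2 p hp (hinf.trans h)⟩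

theorem pi3_involutive : Function.Involutive pi3 := by
  unfold Function.Involutive; decide

theorem map_pi3_mem_forbidden : ∀ p ∈ Forbidden, p.map pi3 ∈ Forbidden := by decide

theorem GoodL.map_pi3 {w : List (Fin 3)} (hw : GoodL w) : GoodL (w.map pi3) := by
  refine ⟨hw.1.map pi3_involutive.injective, fun p hp hinf => ?_⟩
  refine hw.2 (p.map pi3) (map_pi3_mem_forbidden p hp) ?_
  simpa [map_map, pi3_involutive.comp_self] using hinf.map pi3

/-- Closed under good one-letter extensions followed by truncation to the last seven letters,
so it contains the last (at most) seven letters of every good word starting with `1231`. -/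
def goodWindows : List (List (Fin 3)) :=
  [[0,1,2,0], [0,1,2,0,1], [0,1,2,0,2], [0,1,2,0,1,0], [0,1,2,0,2,1],
   [0,1,0,2,0,1,2], [0,1,2,0,1,0,2], [0,1,2,0,2,1,2], [0,1,2,1,0,1,2], [0,2,0,1,2,0,2],
   [0,2,0,1,2,1,0], [0,2,1,2,0,1,0], [0,2,1,2,0,1,2], [1,0,1,2,0,1,0], [1,0,1,2,0,2,1],
   [1,0,2,0,1,2,0], [1,0,2,0,1,2,1], [1,2,0,1,0,2,0], [1,2,0,1,2,1,0], [1,2,0,2,1,2,0],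
   [1,2,1,0,1,2,0], [2,0,1,0,2,0,1], [2,0,1,2,0,2,1], [2,0,1,2,1,0,1], [2,0,2,1,2,0,1],
   [2,1,0,1,2,0,1], [2,1,0,1,2,0,2], [2,1,2,0,1,0,2], [2,1,2,0,1,2,1]]

theorem rtake_append_mem_goodWindows :
    ∀ t ∈ goodWindows, ∀ a : Fin 3, GoodL (t ++ [a]) → (t ++ [a]).rtake 7 ∈ goodWindows := by
  decide

theorem not_suffix_of_mem_goodWindows : ∀ t ∈ goodWindows, ¬ ([0,2,1,0] : List (Fin 3)) <:+ t := by
  decide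

theorem rtake_mem_goodWindows (v : List (Fin 3)) (hv : GoodL ([0,1,2,0] ++ v)) :
    ([0,1,2,0] ++ v).rtake 7 ∈ goodWindows := by
  induction v using reverseRecOn with
  | nil => decide
  | append_singleton v a ih =>
    set u : List (Fin 3) := [0,1,2,0] ++ v
    have hu : [0,1,2,0] ++ (v ++ [a]) = u ++ [a] := (append_assoc _ _ _).symm
    rw [hu] at hv ⊢
    have hwin : (u ++ [a]).rtake 7 = (u.rtake 7 ++ [a]).rtake 7 := by
      simp only [rtake_concat_succ, rtake_rtake_of_le u (by norm_num : 6 ≤ 7)]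
    have hgood : GoodL (u.rtake 7 ++ [a]) :=
      hv.of_isInfix (suffix_append_self_iff.2 (drop_suffix _ u)).isInfix
    rw [hwin]
    exact rtake_append_mem_goodWindows _ (ih (hv.of_isInfix (prefix_append u [a]).isInfix)) a hgood

theorem GoodL.not_suffix_of_prefix {w : List (Fin 3)} (hw : GoodL w) (hp : [0,1,2,0] <+: w) :
    ¬ [0,2,1,0] <:+ w := by
  obtain ⟨v, rfl⟩ := hp
  intro hs
  refine not_suffix_of_mem_goodWindows _ (rtake_mem_goodWindows v hw) ?_
  exact suffix_of_suffix_length_le hs (drop_suffix _ _) (by simp only [rtake, length_drop, length_append, length_cons, length_nil]; omega)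

theorem GoodL.false_of_occurrences {w s₁ t₁ s₂ t₂ : List (Fin 3)} (hw : GoodL w)
    (h₁ : s₁ ++ [0,1,2,0] ++ t₁ = w) (h₂ : s₂ ++ [0,2,1,0] ++ t₂ = w)
    (hs : s₁.length ≤ s₂.length) : False := by
  obtain ⟨u, hu, hp, hq⟩ := exists_isInfix_prefix_suffix h₁ h₂ hs (by simpa using hs)
  exact (hw.of_isInfix hu).not_suffix_of_prefix hp hq

theorem GoodL.not_isInfix_and {w : List (Fin 3)} (hw : GoodL w) :
    ¬ ([0,1,2,0] <:+: w ∧ [0,2,1,0] <:+: w) := by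
  rintro ⟨⟨s₁, t₁, h₁⟩, ⟨s₂, t₂, h₂⟩⟩
  rcases le_total s₁.length s₂.length with hs | hs
  · exact hw.false_of_occurrences h₁ h₂ hs
  · -- swapping `2` and `3` exchanges the two patterns
    refine hw.map_pi3.false_of_occurrences (s₁ := s₂.map pi3) (t₁ := t₂.map pi3)
      (s₂ := s₁.map pi3) (t₂ := t₁.map pi3) ?_ ?_ (by simpa using hs)
    · simp [← h₂, pi3]
    · simp [← h₁, pi3]

section OmegaWords

variable {α : Type*} {w : ℕ → α}

@[simp]
theorem length_factorAtN (w : ℕ → α) (i n : ℕ) : (factorAtN w i n).length = n := by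
  simp [factorAtN]

theorem factorAtN_add (w : ℕ → α) (i m n : ℕ) :
    factorAtN w i (m + n) = factorAtN w i m ++ factorAtN w (i + m) n := by
  simp [factorAtN, List.range_add, Nat.add_assoc]

theorem IsFactorN.of_isInfix {l : List α} {i n : ℕ} (h : l <:+: factorAtN w i n) :
    IsFactorN l w := by
  obtain ⟨s, t, hst⟩ := h
  refine ⟨i + s.length, ?_⟩
  have hn : n = s.length + l.length + t.length := by
    simpa [Nat.add_assoc] using congrArg length hst.symm
  rw [hn, factorAtN_add, factorAtN_add] at hst
  exact (append_inj (append_inj hst (by simp)).1 (by simp)).2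

theorem GoodN.goodL_factorAtN {w : ℕ → Fin 3} (hw : GoodN w) (i n : ℕ) :
    GoodL (factorAtN w i n) :=
  ⟨fun x hx hinf => hw.1 x hx (.of_isInfix hinf), fun p hp hinf => hw.2 p hp (.of_isInfix hinf)⟩

theorem isInfix_factorAtN_zero {l : List α} {i n : ℕ} (h : l = factorAtN w i l.length)
    (hn : i + l.length ≤ n) : l <:+: factorAtN w 0 n := by
  obtain ⟨k, rfl⟩ := Nat.exists_eq_add_of_le hn
  rw [factorAtN_add, factorAtN_add, zero_add, ← h]
  exact infix_append _ _ _

theorem GoodN.not_isFactorN_and {w : ℕ → Fin 3} (hw : GoodN w) :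
    ¬ (IsFactorN [0,1,2,0] w ∧ IsFactorN [0,2,1,0] w) := by
  rintro ⟨⟨i, hi⟩, ⟨j, hj⟩⟩
  exact (hw.goodL_factorAtN 0 (i + j + 4)).not_isInfix_and
    ⟨isInfix_factorAtN_zero hi (by simp), isInfix_factorAtN_zero hj (by simp)⟩

end OmegaWords

section IntegerWords

variable {α : Type*} {w : ℤ → α}

theorem factorAtZ_eq_map_range (w : ℤ → α) (i : ℤ) (n : ℕ) :
    factorAtZ w i n = (range n).map fun k : ℕ => w (i + k) := by
  -- the coercion `List ℕ → List ℤ` inside `factorAtZ` unfolds to a `flatMap`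
  rw [factorAtZ, show ((range n : List ℕ) : List ℤ) = (range n).map Nat.cast from
    flatMap_pure_eq_map _ _, map_map]
  rfl

theorem factorAtZ_add_natCast (w : ℤ → α) (i : ℤ) (m n : ℕ) :
    factorAtZ w (i + m) n = factorAtN (fun k : ℕ => w (i + k)) m n := by
  simp [factorAtZ_eq_map_range, factorAtN, add_assoc]

theorem IsFactorN.isFactorZ {l : List α} {i : ℤ} (h : IsFactorN l fun k : ℕ => w (i + k)) :
    IsFactorZ l w := by
  obtain ⟨m, hm⟩ := h
  exact ⟨i + m, by rw [factorAtZ_add_natCast]; exact hm⟩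

theorem isFactorN_shift {l : List α} {i j : ℤ} (h : l = factorAtZ w j l.length) (hij : i ≤ j) :
    IsFactorN l fun k : ℕ => w (i + k) := by
  refine ⟨(j - i).toNat, ?_⟩
  rw [← factorAtZ_add_natCast, Int.toNat_of_nonneg (sub_nonneg.2 hij), add_sub_cancel]
  exact h

theorem GoodZ.goodN_shift {w : ℤ → Fin 3} (hw : GoodZ w) (i : ℤ) :
    GoodN fun k : ℕ => w (i + k) :=
  ⟨fun x hx hf => hw.1 x hx hf.isFactorZ, fun p hp hf => hw.2 p hp hf.isFactorZ⟩

theorem GoodZ.not_isFactorZ_and {w : ℤ → Fin 3} (hw : GoodZ w) :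
    ¬ (IsFactorZ [0,1,2,0] w ∧ IsFactorZ [0,2,1,0] w) := by
  rintro ⟨⟨i, hi⟩, ⟨j, hj⟩⟩
  exact (hw.goodN_shift (min i j)).not_isFactorN_and
    ⟨isFactorN_shift hi (min_le_left i j), isFactorN_shift hj (min_le_right i j)⟩

end IntegerWords

/-- For every good word `w` over `S` (finite, ω- or ℤ-word), `1231` is not a
factor of `w` or `1321` is not a factor of `w`. -/
theorem stmt_7 :
    (∀ w : List (Fin 3), GoodL w →
      ¬ [0,1,2,0] <:+: w ∨ ¬ [0,2,1,0] <:+: w) ∧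
    (∀ w : ℕ → Fin 3, GoodN w →
      ¬ IsFactorN [0,1,2,0] w ∨ ¬ IsFactorN [0,2,1,0] w) ∧
    (∀ w : ℤ → Fin 3, GoodZ w →
      ¬ IsFactorZ [0,1,2,0] w ∨ ¬ IsFactorZ [0,2,1,0] w) :=
  ⟨fun _ hw => not_and_or.1 hw.not_isInfix_and, fun _ hw => not_and_or.1 hw.not_isFactorN_and,
    fun _ hw => not_and_or.1 hw.not_isFactorZ_and⟩
end

section
/- Let v be a ℤ-word over T = {a,b,c,d} such that the ℤ-word f(v) over S = {1,2,3} is good. Then none of ac, aba, bd, cb, da, dc is a factor of v. -/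
/-!
Each listed factor of `v` maps under `f` to a factor of `f(v)` containing a square or a
forbidden factor: `f(ac) ∋ 1313`, `f(aba) ∋ 312312`, `f(bd) = 123123`, `f(da) ∋ 2121`.
For `cb` and `dc` one more letter is needed: every `f(x)` begins with `1`, so `f(cbx)` contains
`231231`; and `f(x)` ends in `3` unless `x = d`, so `f(xdc)` contains `3123213` or `f(ddc)`
contains `12321232`.
-/

section Factors

variable {α : Type*}

-- The cast in `factorAtZ` elaborates as a monadic lift of `List.range n` to `List ℤ`.
theorem factorAtZ_eq_map (w : ℤ → α) (i : ℤ) (n : ℕ) :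
    factorAtZ w i n = (List.range n).map fun k : ℕ => w (i + k) := by
  unfold factorAtZ
  induction List.range n <;> simp_all

theorem factorAtZ_length (w : ℤ → α) (i : ℤ) (n : ℕ) : (factorAtZ w i n).length = n := by
  simp [factorAtZ_eq_map]

theorem factorAtZ_add (w : ℤ → α) (i : ℤ) (m n : ℕ) :
    factorAtZ w i (m + n) = factorAtZ w i m ++ factorAtZ w (i + m) n := by
  simp [factorAtZ_eq_map, List.range_add, add_assoc]

theorem factorAtZ_one (w : ℤ → α) (i : ℤ) : factorAtZ w i 1 = [w i] := by
  simp [factorAtZ_eq_map]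

theorem factorAtZ_succ (w : ℤ → α) (i : ℤ) (n : ℕ) :
    factorAtZ w i (n + 1) = w i :: factorAtZ w (i + 1) n := by
  rw [Nat.add_comm, factorAtZ_add, factorAtZ_one, Nat.cast_one, List.singleton_append]

theorem IsFactorZ.of_infix {w : ℤ → α} {u x : List α} (hu : IsFactorZ u w) (hx : x <:+: u) :
    IsFactorZ x w := by
  obtain ⟨s, t, rfl⟩ := hx
  obtain ⟨i, hi⟩ := hu
  rw [List.length_append, List.length_append, factorAtZ_add, factorAtZ_add] at hi
  obtain ⟨hs, -⟩ := List.append_inj hi.symm (by simp [factorAtZ_length])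
  obtain ⟨-, hx⟩ := List.append_inj hs (factorAtZ_length _ _ _)
  exact ⟨i + s.length, hx.symm⟩

theorem IsFactorZ.exists_append_singleton {w : ℤ → α} {u : List α} (hu : IsFactorZ u w) :
    ∃ a, IsFactorZ (u ++ [a]) w := by
  obtain ⟨i, hi⟩ := hu
  refine ⟨w (i + u.length), i, ?_⟩
  rw [List.length_append, factorAtZ_add, ← hi, List.length_singleton, factorAtZ_one]

theorem IsFactorZ.exists_cons {w : ℤ → α} {u : List α} (hu : IsFactorZ u w) :
    ∃ a, IsFactorZ (a :: u) w := by
  obtain ⟨i, hi⟩ := hu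
  refine ⟨w (i - 1), i - 1, ?_⟩
  rw [List.length_cons, factorAtZ_succ, sub_add_cancel, ← hi]

theorem ZConcat.isFactorZ_flatMap {β : Type*} {w : ℤ → β} {v : ℤ → α} {φ : α → List β}
    (hw : ZConcat w fun i => φ (v i)) {l : List α} (hl : IsFactorZ l v) :
    IsFactorZ (l.flatMap φ) w := by
  obtain ⟨p, hp, hblock⟩ := hw
  obtain ⟨i, hi⟩ := hl
  refine ⟨p i, ?_⟩
  induction l generalizing i with
  | nil => rfl
  | cons a l ih =>
    rw [List.length_cons, factorAtZ_succ] at hi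
    obtain ⟨rfl, hl⟩ := List.cons_eq_cons.mp hi
    rw [List.flatMap_cons, List.length_append, factorAtZ_add, ← hblock i, ← hp i,
      ← ih (i + 1) hl]

end Factors

theorem GoodZ.goodL_of_isFactorZ {w : ℤ → Fin 3} {u : List (Fin 3)} (hw : GoodZ w)
    (hu : IsFactorZ u w) : GoodL u :=
  ⟨fun x hx hxu => hw.1 x hx (hu.of_infix hxu), fun p hp hpu => hw.2 p hp (hu.of_infix hpu)⟩

theorem not_goodL_of_square_infix {u x : List (Fin 3)} (hx : x ≠ []) (h : x ++ x <:+: u) :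
    ¬ GoodL u :=
  fun hu => hu.1 x hx h

theorem not_goodL_of_forbidden_infix {u p : List (Fin 3)} (hp : p ∈ Forbidden) (h : p <:+: u) :
    ¬ GoodL u :=
  fun hu => hu.2 p hp h

/-- If `v` is a ℤ-word over `T = {a,b,c,d}` whose image `f(v)` is a good ℤ-word
over `S`, then none of `ac, aba, bd, cb, da, dc` is a factor of `v`. -/
theorem stmt_14 (v : ℤ → Fin 4) (w : ℤ → Fin 3)
    (hw : ZConcat w (fun i => fL (v i))) (hg : GoodZ w) :
    ¬ IsFactorZ [0,2] v ∧ ¬ IsFactorZ [0,1,0] v ∧ ¬ IsFactorZ [1,3] v ∧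
    ¬ IsFactorZ [2,1] v ∧ ¬ IsFactorZ [3,0] v ∧ ¬ IsFactorZ [3,2] v := by
  have good : ∀ l, IsFactorZ l v → GoodL (fW l) :=
    fun _ hl => hg.goodL_of_isFactorZ (hw.isFactorZ_flatMap hl)
  refine ⟨fun h => ?_, fun h => ?_, fun h => ?_, fun h => ?_, fun h => ?_, fun h => ?_⟩
  · exact not_goodL_of_square_infix (x := [0,2]) (by simp) (by decide) (good _ h)
  · exact not_goodL_of_square_infix (x := [2,0,1]) (by simp) (by decide) (good _ h)
  · exact not_goodL_of_square_infix (x := [0,1,2]) (by simp) (by decide) (good _ h)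
  · obtain ⟨x, hx⟩ := h.exists_append_singleton
    exact not_goodL_of_square_infix (x := [1,2,0]) (by simp) (by fin_cases x <;> decide)
      (good _ hx)
  · exact not_goodL_of_square_infix (x := [1,0]) (by simp) (by decide) (good _ h)
  · obtain ⟨x, hx⟩ := h.exists_cons
    by_cases hx3 : x = 3
    · subst hx3
      exact not_goodL_of_square_infix (x := [0,1,2,1]) (by simp) (by decide) (good _ hx)
    · exact not_goodL_of_forbidden_infix (p := [2,0,1,2,1,0,2]) (by decide)
        (by revert hx3; fin_cases x <;> decide) (good _ hx)
end

section
/- Every square-free ℤ-word over S = {1,2,3} can be written as a bi-infinite concatenation of blocks from {12, 123, 1232, 13, 132, 1323}. -/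
/-!
The letter `1` occurs in every window of length four of a square-free ℤ-word over `{1,2,3}`:
a stretch avoiding it alternates between `2` and `3`, and `xyxy` is a square. So the
occurrences of `1` are unbounded in both directions and can be enumerated increasingly by `ℤ`.
Consecutive occurrences are two to four apart, and the factor from one to the next is `1`
followed by an alternating word over `{2,3}` of length one to three, which is one of the six
blocks.
-/

theorem Set.exists_consecutive_enumeration (s : Set ℤ) (hup : ¬BddAbove s)
    (hdown : ¬BddBelow s) :
    ∃ p : ℤ → ℤ, ∀ i, p i ∈ s ∧ p i < p (i + 1) ∧ ∀ j ∈ s, p i < j → p (i + 1) ≤ j := by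
  classical
  let := LinearLocallyFiniteOrder.succOrder s
  let := LinearLocallyFiniteOrder.predOrder s
  have : NoMaxOrder s := ⟨fun x => let ⟨j, hj, h⟩ := not_bddAbove_iff.1 hup x; ⟨⟨j, hj⟩, h⟩⟩
  have : NoMinOrder s := ⟨fun x => let ⟨j, hj, h⟩ := not_bddBelow_iff.1 hdown x; ⟨⟨j, hj⟩, h⟩⟩
  have : Nonempty s := (nonempty_of_not_bddAbove hup).to_subtype
  let e : ℤ ≃o s := orderIsoIntOfLinearSuccPredArch.symm
  have hcov (i : ℤ) : e i ⋖ e (i + 1) := (apply_covBy_apply_iff e).2 (Order.covBy_add_one i)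
  exact ⟨fun i => e i, fun i => ⟨(e i).2, (hcov i).lt,
    fun j hj hij => not_lt.1 fun h => (hcov i).2 (c := ⟨j, hj⟩) hij h⟩⟩

@[simp]
theorem length_factorAtZ {α : Type*} (w : ℤ → α) (i : ℤ) (n : ℕ) :
    (factorAtZ w i n).length = n := by
  simp [factorAtZ]

theorem Fin.eq_of_ne_zero_of_ne {x y z : Fin 3} (hx : x ≠ 0) (hy : y ≠ 0) (hz : z ≠ 0)
    (hxy : x ≠ y) (hyz : y ≠ z) : x = z := by
  omega

namespace SquareFreeZ

section

variable {α : Type*} {w : ℤ → α}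

theorem apply_ne_apply_add_one (hw : SquareFreeZ w) (j : ℤ) : w j ≠ w (j + 1) := fun h =>
  hw [w j] (List.cons_ne_nil _ _) ⟨j, by simp [factorAtZ, List.range_succ, h]⟩

theorem not_apply_eq_and_apply_eq (hw : SquareFreeZ w) (j : ℤ) :
    ¬ (w j = w (j + 2) ∧ w (j + 1) = w (j + 3)) := fun ⟨h1, h2⟩ =>
  hw [w j, w (j + 1)] (List.cons_ne_nil _ _) ⟨j, by simp [factorAtZ, List.range_succ, h1, h2]⟩

end

variable {w : ℤ → Fin 3}

theorem exists_mem_Ico_apply_eq_zero (hw : SquareFreeZ w) (i : ℤ) :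
    ∃ j ∈ Set.Ico i (i + 4), w j = 0 := by
  by_contra! h
  have h₀ : w i ≠ 0 := h i ⟨le_rfl, by omega⟩
  have h₁ : w (i + 1) ≠ 0 := h _ ⟨by omega, by omega⟩
  have h₂ : w (i + 2) ≠ 0 := h _ ⟨by omega, by omega⟩
  have h₃ : w (i + 3) ≠ 0 := h _ ⟨by omega, by omega⟩
  have h₁₂ : w (i + 1) ≠ w (i + 2) := by simpa [add_assoc] using hw.apply_ne_apply_add_one (i + 1)
  have h₂₃ : w (i + 2) ≠ w (i + 3) := by simpa [add_assoc] using hw.apply_ne_apply_add_one (i + 2)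
  exact hw.not_apply_eq_and_apply_eq i
    ⟨Fin.eq_of_ne_zero_of_ne h₀ h₁ h₂ (hw.apply_ne_apply_add_one i) h₁₂,
      Fin.eq_of_ne_zero_of_ne h₁ h₂ h₃ h₁₂ h₂₃⟩

def squareFreeBlocks : List (List (Fin 3)) :=
  [[0,1], [0,1,2], [0,1,2,1], [0,2], [0,2,1], [0,2,1,2]]

theorem factorAtZ_mem_squareFreeBlocks (hw : SquareFreeZ w) {a b : ℤ} (ha : w a = 0)
    (hb : w b = 0) (hab : a < b) (hnext : ∀ j, w j = 0 → a < j → b ≤ j) :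
    factorAtZ w a (b - a).toNat ∈ squareFreeBlocks := by
  have hne (j : ℤ) (hj₁ : a < j) (hj₂ : j < b) : w j ≠ 0 := fun h => (hnext j h hj₁).not_gt hj₂
  have hgap₂ : a + 2 ≤ b := by
    by_contra! h
    obtain rfl : b = a + 1 := by omega
    exact hw.apply_ne_apply_add_one a (ha.trans hb.symm)
  obtain ⟨j, ⟨hj₁, hj₄⟩, hj⟩ := hw.exists_mem_Ico_apply_eq_zero (a + 1)
  have hgap₄ : b ≤ a + 4 := by linarith [hnext j hj (by omega)]
  have h₁ := hne (a + 1) (by omega) (by omega)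
  obtain rfl | hgap₃ : b = a + 2 ∨ a + 3 ≤ b := by omega
  · rw [show factorAtZ w a (a + 2 - a).toNat = [0, w (a + 1)] by
      simp [factorAtZ, List.range_succ, ha]]
    generalize w (a + 1) = x at h₁ ⊢
    revert x; decide
  have h₂ := hne (a + 2) (by omega) (by omega)
  have h₁₂ : w (a + 1) ≠ w (a + 2) := by simpa [add_assoc] using hw.apply_ne_apply_add_one (a + 1)
  obtain rfl | rfl : b = a + 3 ∨ b = a + 4 := by omega
  · rw [show factorAtZ w a (a + 3 - a).toNat = [0, w (a + 1), w (a + 2)] by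
      simp [factorAtZ, List.range_succ, ha]]
    generalize w (a + 1) = x, w (a + 2) = y at h₁ h₂ h₁₂ ⊢
    revert x y; decide
  · have h₂₃ : w (a + 2) ≠ w (a + 3) := by simpa [add_assoc] using hw.apply_ne_apply_add_one (a + 2)
    have h₃ : w (a + 3) = w (a + 1) :=
      (Fin.eq_of_ne_zero_of_ne h₁ h₂ (hne (a + 3) (by omega) (by omega)) h₁₂ h₂₃).symm
    rw [show factorAtZ w a (a + 4 - a).toNat = [0, w (a + 1), w (a + 2), w (a + 1)] by
      simp [factorAtZ, List.range_succ, ha, h₃]]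
    generalize w (a + 1) = x, w (a + 2) = y at h₁ h₂ h₁₂ ⊢
    revert x y; decide

end SquareFreeZ

/-- Every square-free ℤ-word over `S = {1,2,3}` is a bi-infinite concatenation of
blocks from `{12, 123, 1232, 13, 132, 1323}`. -/
theorem stmt_15 (w : ℤ → Fin 3) (hw : SquareFreeZ w) :
    ∃ blocks : ℤ → List (Fin 3),
      (∀ i, blocks i ∈ [[0,1], [0,1,2], [0,1,2,1], [0,2], [0,2,1], [0,2,1,2]]) ∧
      ZConcat w blocks := by
  have hup : ¬BddAbove {j | w j = 0} := not_bddAbove_iff.2 fun i =>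
    let ⟨j, ⟨hj, _⟩, h⟩ := hw.exists_mem_Ico_apply_eq_zero (i + 1); ⟨j, h, by omega⟩
  have hdown : ¬BddBelow {j | w j = 0} := not_bddBelow_iff.2 fun i =>
    let ⟨j, ⟨_, hj⟩, h⟩ := hw.exists_mem_Ico_apply_eq_zero (i - 4); ⟨j, h, by omega⟩
  obtain ⟨p, hp⟩ := Set.exists_consecutive_enumeration _ hup hdown
  refine ⟨fun i => factorAtZ w (p i) (p (i + 1) - p i).toNat, fun i => ?_, p, fun i => ?_,
    fun i => by rw [length_factorAtZ]⟩
  · obtain ⟨hzero, hlt, hnext⟩ := hp i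
    exact hw.factorAtZ_mem_squareFreeBlocks hzero (hp (i + 1)).1 hlt hnext
  · have := (hp i).2.1
    rw [length_factorAtZ]
    omega
end

section
/- The map f∘g : U* → S* is injective: if u₁ and u₂ are words over U = {a,c,d} with f(g(u₁)) = f(g(u₂)), then u₁ = u₂. -/
/-!
`f ∘ g` is a composite of two injective maps. The map `g` only inserts letters `b`, so
erasing them recovers `u`. The code `f` is not prefix-free (`f(b) = 123` is a prefix of
`f(d) = 1232`), but it is decodable with one letter of delay: every code word starts with `1`,
so `123` followed by `2` is `f(d)`, while `123` followed by `1` or by the end of the word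
is `f(b)`.
-/

def fDecode : List (Fin 3) → List (Fin 4)
  | 0 :: 1 :: 0 :: 2 :: s => 0 :: fDecode s
  | 0 :: 2 :: 1 :: 2 :: s => 2 :: fDecode s
  | 0 :: 1 :: 2 :: 1 :: s => 3 :: fDecode s
  | 0 :: 1 :: 2 :: s => 1 :: fDecode s
  | _ => []

lemma fW_cons (t : Fin 4) (v : List (Fin 4)) : fW (t :: v) = fL t ++ fW v := by
  simp [fW]

lemma fW_eq_nil_or_head_eq_zero (v : List (Fin 4)) : fW v = [] ∨ ∃ s, fW v = 0 :: s := by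
  cases v with
  | nil => simp [fW]
  | cons t v => fin_cases t <;> simp [fW_cons, fL]

lemma fDecode_fW : Function.LeftInverse fDecode fW := by
  intro v
  induction v with
  | nil => simp [fW, fDecode]
  | cons t v ih =>
    rcases fW_eq_nil_or_head_eq_zero v with hv | ⟨s, hv⟩ <;>
      fin_cases t <;> simp_all [fW_cons, fL, fDecode]

lemma fW_injective : Function.Injective fW := fDecode_fW.injective

lemma gW_filter_ne_b (u : List (Fin 3)) : (gW u).filter (· ≠ 1) = u.map uT := by
  induction u using gW.induct with
  | case1 => rfl
  | case2 x => fin_cases x <;> rfl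
  | case3 x y r ih =>
    rw [gW, List.filter_append, ih]
    fin_cases x <;> split <;> simp [uT]

lemma uT_injective : Function.Injective uT := by decide

lemma gW_injective : Function.Injective gW := fun u₁ u₂ h =>
  (List.map_injective_iff.mpr uT_injective) <| by
    rw [← gW_filter_ne_b, ← gW_filter_ne_b, h]

/-- The map `f ∘ g : U* → S*` is injective. -/
theorem stmt_16 (u₁ u₂ : List (Fin 3)) (h : fW (gW u₁) = fW (gW u₂)) :
    u₁ = u₂ :=
  gW_injective (fW_injective h)
end
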